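/- Let (X,d) be a metric space, M a nonempty proper closed subset of X, F : X∖M → (0,∞) any positive function, and v(x,y) = 2·log((d(x,y) + max{F(x), F(y)}) / √(F(x)·F(y))) the generalized Ibragimov metric on X∖M. Then for all x,y ∈ X∖M one has v(x,y) ≥ |log(F(x)/F(y))| and v(x,y) ≥ log((1 + d(x,y)/F(x))·(1 + d(x,y)/F(y))), hence d(x,y) ≤ F(x)·(e^{v(x,y)} − 1); consequently the identity map 1 : (X∖M, d) → (X∖M, v) is an open map (if v(x_n,x) → 0 then d(x_n,x) → 0). -/
import Mathlib


open Real Filter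

/-- Generalized Ibragimov function. -/
noncomputable def vIb {X : Type*} [MetricSpace X] (F : X → ℝ) (x y : X) : ℝ :=
  2 * Real.log ((dist x y + max (F x) (F y)) / Real.sqrt (F x * F y))

theorem stmt_17 {X : Type*} [MetricSpace X] (M : Set X)
    (hMclosed : IsClosed M) (hMne : M.Nonempty) (hMproper : M ≠ Set.univ)
    (F : X → ℝ) (hFpos : ∀ x ∉ M, 0 < F x) :
    (∀ x ∉ M, ∀ y ∉ M, |Real.log (F x / F y)| ≤ vIb F x y) ∧
    (∀ x ∉ M, ∀ y ∉ M,
      Real.log ((1 + dist x y / F x) * (1 + dist x y / F y)) ≤ vIb F x y) ∧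
    (∀ x ∉ M, ∀ y ∉ M, dist x y ≤ F x * (Real.exp (vIb F x y) - 1)) ∧
    -- consequently, the identity map `(X∖M, d) → (X∖M, v)` is open
    (∀ x ∉ M, ∀ u : ℕ → X, (∀ n, u n ∉ M) →
      Tendsto (fun n => vIb F (u n) x) atTop (nhds 0) →
      Tendsto (fun n => dist (u n) x) atTop (nhds 0)) := by
  have key : ∀ x, x ∉ M → ∀ y, y ∉ M → vIb F x y =
      Real.log ((dist x y + max (F x) (F y)) ^ 2 / (F x * F y)) := by
    intro x hx y hy
    have hp : 0 < F x * F y := mul_pos (hFpos x hx) (hFpos y hy)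
    unfold vIb
    rw [show (dist x y + max (F x) (F y)) ^ 2 / (F x * F y)
        = ((dist x y + max (F x) (F y)) / Real.sqrt (F x * F y)) ^ 2 by
      rw [div_pow, Real.sq_sqrt hp.le]]
    rw [Real.log_pow]
    push_cast; ring
  have h1 : ∀ x ∉ M, ∀ y ∉ M, |Real.log (F x / F y)| ≤ vIb F x y := by
    intro x hx y hy
    have hpx := hFpos x hx; have hpy := hFpos y hy
    have hd : 0 ≤ dist x y := dist_nonneg
    have hxm : F x ≤ dist x y + max (F x) (F y) := by
      have := le_max_left (F x) (F y); linarith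
    have hym : F y ≤ dist x y + max (F x) (F y) := by
      have := le_max_right (F x) (F y); linarith
    rw [key x hx y hy, abs_le]
    constructor
    · rw [neg_le, Real.log_div hpx.ne' hpy.ne', neg_sub,
        ← Real.log_div hpy.ne' hpx.ne']
      apply Real.log_le_log (by positivity)
      rw [div_le_div_iff₀ hpx (by positivity)]
      nlinarith [mul_le_mul hym hym hpy.le (hpy.le.trans hym), hpx.le]
    · apply Real.log_le_log (by positivity)
      rw [div_le_div_iff₀ hpy (by positivity)]
      nlinarith [mul_le_mul hxm hxm hpx.le (hpx.le.trans hxm), hpy.le]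
  have h2 : ∀ x ∉ M, ∀ y ∉ M,
      Real.log ((1 + dist x y / F x) * (1 + dist x y / F y)) ≤ vIb F x y := by
    intro x hx y hy
    have hpx := hFpos x hx; have hpy := hFpos y hy
    have hd : 0 ≤ dist x y := dist_nonneg
    have hxm := le_max_left (F x) (F y)
    have hym := le_max_right (F x) (F y)
    rw [key x hx y hy]
    apply Real.log_le_log (by positivity)
    rw [le_div_iff₀ (by positivity)]
    have e : (1 + dist x y / F x) * (1 + dist x y / F y) * (F x * F y)
        = (F x + dist x y) * (F y + dist x y) := by
      field_simp
    rw [e]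
    nlinarith [mul_le_mul hxm hym hpy.le (le_trans hpx.le hxm)]
  have h3 : ∀ x ∉ M, ∀ y ∉ M, dist x y ≤ F x * (Real.exp (vIb F x y) - 1) := by
    intro x hx y hy
    have hpx := hFpos x hx; have hpy := hFpos y hy
    have hd : 0 ≤ dist x y := dist_nonneg
    have hA : 1 + dist x y / F x ≤ Real.exp (vIb F x y) := by
      have step : Real.log (1 + dist x y / F x) ≤ vIb F x y := by
        refine le_trans ?_ (h2 x hx y hy)
        apply Real.log_le_log (by positivity)
        nlinarith [div_nonneg hd hpx.le, div_nonneg hd hpy.le]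
      calc 1 + dist x y / F x
          = Real.exp (Real.log (1 + dist x y / F x)) := by
            rw [Real.exp_log (by positivity)]
        _ ≤ Real.exp (vIb F x y) := Real.exp_le_exp.2 step
    have := mul_le_mul_of_nonneg_left hA hpx.le
    rw [mul_add, mul_one, mul_div_cancel₀ _ hpx.ne'] at this
    linarith
  refine ⟨h1, h2, h3, ?_⟩
  intro x hx u hu hv
  have hsymm : ∀ n, vIb F x (u n) = vIb F (u n) x := by
    intro n; unfold vIb
    rw [dist_comm, max_comm (F x), mul_comm (F x)]
  have hb : ∀ n, dist (u n) x ≤ F x * (Real.exp (vIb F (u n) x) - 1) := by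
    intro n
    rw [dist_comm]
    have := h3 x hx (u n) (hu n)
    rwa [hsymm n] at this
  have hlim : Tendsto (fun n => F x * (Real.exp (vIb F (u n) x) - 1)) atTop (nhds 0) := by
    have : Tendsto (fun n => Real.exp (vIb F (u n) x) - 1) atTop (nhds (Real.exp 0 - 1)) :=
      ((Real.continuous_exp.tendsto 0).comp hv).sub tendsto_const_nhds
    simpa using this.const_mul (F x)
  exact squeeze_zero (fun n => dist_nonneg) hb hlim
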